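/- For n ≥ 3 and the standard n-simplex Tₙ, the rule L(f) = ((n+1)/((n+2)·n!))·f(Pₙ₊₁) + (1/(n+2)!)·Σⱼ₌₀ⁿ f(Pⱼ) is not exact for f = x₁x₂x₃: L(f) = 1/((n+1)·(n+2)!) while ∫_{Tₙ} x₁x₂x₃ dV = 1/(n+3)!. -/

import Mathlib

/-! Every vertex of `Tₙ` has at most one nonzero coordinate, so only the centroid term of the
rule survives, giving `(n+1)/((n+2) n!) · (n+1)⁻³ = 1/((n+1)(n+2)!)`.

For the integral, slice `t·Tₙ₊₁` along its last coordinate `x ∈ [0, t]`: the slice is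
`(t - x)·Tₙ`. By induction on `n`, `∫_{t·Tₙ} x₀ ⋯ x_{k-1} = t^(n+k)/(n+k)!` for `k ≤ n`, each
step being one of the elementary integrals `∫₀ᵗ (t - x)^m/m! = t^(m+1)/(m+1)!` and
`∫₀ᵗ x (t - x)^m/m! = t^(m+2)/(m+2)!`. -/

open MeasureTheory

/-- The standard n-simplex in ℝⁿ. -/
def Simplex (n : ℕ) : Set (Fin n → ℝ) := {v | (∀ i, 0 ≤ v i) ∧ ∑ i, v i ≤ 1}

/-- The vertices of the standard n-simplex: `P 0 = 0` and `P (k+1)` is the k-th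
standard basis vector. -/
def simplexVertex (n : ℕ) (j : Fin (n + 1)) : Fin n → ℝ :=
  fun i => if (j : ℕ) = (i : ℕ) + 1 then 1 else 0

def scaledSimplex (n : ℕ) (t : ℝ) : Set (Fin n → ℝ) := {v | (∀ i, 0 ≤ v i) ∧ ∑ i, v i ≤ t}

theorem isClosed_scaledSimplex (n : ℕ) (t : ℝ) : IsClosed (scaledSimplex n t) := by
  have h : scaledSimplex n t = (⋂ i, {v | 0 ≤ v i}) ∩ {v | ∑ i, v i ≤ t} := by
    ext v; simp [scaledSimplex]
  rw [h]
  exact (isClosed_iInter fun i => isClosed_le continuous_const (continuous_apply i)).inter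
    (isClosed_le (continuous_finsetSum _ fun i _ => continuous_apply i) continuous_const)

theorem isCompact_scaledSimplex (n : ℕ) (t : ℝ) : IsCompact (scaledSimplex n t) := by
  refine (isCompact_Icc (a := 0) (b := fun _ => max t 0)).of_isClosed_subset
    (isClosed_scaledSimplex n t) fun v ⟨hv0, hvt⟩ => ⟨hv0, fun i => ?_⟩
  exact le_max_of_le_left
    ((Finset.single_le_sum (fun j _ => hv0 j) (Finset.mem_univ i)).trans hvt)

theorem scaledSimplex_eq_empty {n : ℕ} {t : ℝ} (ht : t < 0) : scaledSimplex n t = ∅ :=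
  Set.eq_empty_of_forall_notMem fun _ ⟨hv0, hvt⟩ =>
    (Finset.sum_nonneg fun i _ => hv0 i).not_gt (hvt.trans_lt ht)

theorem snoc_mem_scaledSimplex_iff {n : ℕ} {t x : ℝ} {y : Fin n → ℝ} :
    Fin.snoc y x ∈ scaledSimplex (n + 1) t ↔ 0 ≤ x ∧ y ∈ scaledSimplex n (t - x) := by
  simp only [scaledSimplex, Set.mem_ofPred_eq, Fin.forall_fin_succ', Fin.sum_univ_castSucc,
    Fin.snoc_castSucc, Fin.snoc_last, le_sub_iff_add_le]
  tauto

def initialProd (k : ℕ) {n : ℕ} (v : Fin n → ℝ) : ℝ := ∏ i : Fin n, if (i : ℕ) < k then v i else 1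

theorem continuous_initialProd (k n : ℕ) : Continuous (initialProd k (n := n)) :=
  continuous_finsetProd _ fun i _ => by
    split_ifs
    exacts [continuous_apply i, continuous_const]

theorem initialProd_snoc (k : ℕ) {n : ℕ} (y : Fin n → ℝ) (x : ℝ) :
    initialProd k (Fin.snoc y x : Fin (n + 1) → ℝ)
      = (if n < k then x else 1) * initialProd k y := by
  simp only [initialProd, Fin.prod_univ_castSucc, Fin.snoc_castSucc, Fin.snoc_last,
    Fin.val_castSucc, Fin.val_last]
  rw [mul_comm]

theorem initialProd_three {n : ℕ} (hn : 2 < n) (v : Fin n → ℝ) :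
    initialProd 3 v = v ⟨0, by omega⟩ * v ⟨1, by omega⟩ * v ⟨2, by omega⟩ := by
  have hfilter : Finset.univ.filter (fun i : Fin n => (i : ℕ) < 3)
      = {⟨0, by omega⟩, ⟨1, by omega⟩, ⟨2, by omega⟩} := by
    ext i
    simp only [Finset.mem_filter, Finset.mem_univ, true_and, Finset.mem_insert,
      Finset.mem_singleton, Fin.ext_iff]
    omega
  rw [initialProd, ← Finset.prod_filter, hfilter, Finset.prod_insert (by simp [Fin.ext_iff]),
    Finset.prod_insert (by simp [Fin.ext_iff]), Finset.prod_singleton, mul_assoc]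

theorem integrable_indicator_initialProd (k n : ℕ) (t : ℝ) :
    Integrable ((scaledSimplex n t).indicator (initialProd k)) :=
  (integrable_indicator_iff (isClosed_scaledSimplex n t).measurableSet).2 <|
    (continuous_initialProd k n).continuousOn.integrableOn_compact (isCompact_scaledSimplex n t)

theorem indicator_scaledSimplex_snoc (k : ℕ) {n : ℕ} (t x : ℝ) (y : Fin n → ℝ) :
    (scaledSimplex (n + 1) t).indicator (initialProd k) (Fin.snoc y x)
      = if 0 ≤ x then
          (if n < k then x else 1) * (scaledSimplex n (t - x)).indicator (initialProd k) y
        else 0 := by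
  by_cases hx : 0 ≤ x <;> by_cases hy : y ∈ scaledSimplex n (t - x) <;>
    simp [Set.indicator, snoc_mem_scaledSimplex_iff, initialProd_snoc, hx, hy]

theorem integral_eq_integral_integral_snoc {α E : Type*} [MeasureSpace α]
    [SigmaFinite (volume : Measure α)] [NormedAddCommGroup E] [NormedSpace ℝ E] {n : ℕ}
    {F : (Fin (n + 1) → α) → E} (hF : Integrable F) :
    ∫ v, F v = ∫ x, ∫ y : Fin n → α, F (Fin.snoc y x) := by
  have e := (volume_preserving_piFinSuccAbove (fun _ : Fin (n + 1) => α) (Fin.last n)).symm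
  have hsnoc : ∀ p : α × (Fin n → α),
      (MeasurableEquiv.piFinSuccAbove (fun _ => α) (Fin.last n)).symm p = Fin.snoc p.2 p.1 := by
    rintro ⟨x, y⟩
    simp [MeasurableEquiv.piFinSuccAbove_symm_apply, Fin.snocEquiv]
  have hF' := (e.integrable_comp_emb (MeasurableEquiv.measurableEmbedding _)).2 hF
  simp only [Function.comp_def, hsnoc] at hF'
  rw [← e.integral_comp']
  simp only [hsnoc]
  exact integral_prod (fun p : α × (Fin n → α) => F (Fin.snoc p.2 p.1)) hF'

theorem integral_sub_pow_div_factorial (m : ℕ) (t : ℝ) :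
    ∫ x in (0 : ℝ)..t, (t - x) ^ m / m.factorial = t ^ (m + 1) / (m + 1).factorial := by
  rw [intervalIntegral.integral_div, intervalIntegral.integral_comp_sub_left (fun x => x ^ m),
    Nat.factorial_succ]
  simp [integral_pow, div_div, mul_comm]

theorem integral_mul_sub_pow_div_factorial (m : ℕ) (t : ℝ) :
    ∫ x in (0 : ℝ)..t, x * ((t - x) ^ m / m.factorial) = t ^ (m + 2) / (m + 2).factorial := by
  have hsplit : ∀ x : ℝ, x * ((t - x) ^ m / m.factorial)
      = t * ((t - x) ^ m / m.factorial) - (m + 1) * ((t - x) ^ (m + 1) / (m + 1).factorial) := by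
    intro x
    rw [Nat.factorial_succ]
    push_cast
    field_simp
    ring
  have hint : ∀ j : ℕ, IntervalIntegrable (fun x : ℝ => (t - x) ^ j / j.factorial) volume 0 t :=
    fun j => by apply Continuous.intervalIntegrable; fun_prop
  simp only [hsplit]
  rw [intervalIntegral.integral_sub ((hint m).const_mul t) ((hint (m + 1)).const_mul _),
    intervalIntegral.integral_const_mul, intervalIntegral.integral_const_mul,
    integral_sub_pow_div_factorial, integral_sub_pow_div_factorial, Nat.factorial_succ (m + 1)]
  push_cast
  field_simp
  ring

theorem setIntegral_initialProd_scaledSimplex (k n : ℕ) {t : ℝ} (ht : 0 ≤ t) :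
    ∫ v in scaledSimplex n t, initialProd k v
      = t ^ (n + min n k) / (n + min n k).factorial := by
  induction n generalizing t with
  | zero =>
    have huniv : scaledSimplex 0 t = Set.univ := by simp [scaledSimplex, ht]
    simp [huniv, initialProd, measureReal_def, volume_pi, Measure.pi_empty_univ]
  | succ n ih =>
    set m := n + min n k
    have hsection : ∀ x, ∫ y, (scaledSimplex (n + 1) t).indicator (initialProd k) (Fin.snoc y x)
        = (Set.Icc 0 t).indicator
            (fun x => (if n < k then x else 1) * ((t - x) ^ m / m.factorial)) x := by
      intro x
      simp only [indicator_scaledSimplex_snoc]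
      by_cases hx : 0 ≤ x
      · simp only [if_pos hx]
        rw [integral_const_mul,
          integral_indicator (isClosed_scaledSimplex n (t - x)).measurableSet]
        by_cases hxt : x ≤ t
        · rw [ih (sub_nonneg.2 hxt), Set.indicator_of_mem (Set.mem_Icc.2 ⟨hx, hxt⟩)]
        · rw [scaledSimplex_eq_empty (by linarith), Measure.restrict_empty, integral_zero_measure,
            Set.indicator_of_notMem fun h => hxt h.2, mul_zero]
      · simp only [if_neg hx]
        rw [integral_zero, Set.indicator_of_notMem fun h => hx h.1]
    rw [← integral_indicator (isClosed_scaledSimplex _ t).measurableSet,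
      integral_eq_integral_integral_snoc (integrable_indicator_initialProd k _ t)]
    simp only [hsection]
    rw [integral_indicator measurableSet_Icc, integral_Icc_eq_integral_Ioc,
      ← intervalIntegral.integral_of_le ht]
    by_cases hnk : n < k
    · have hdeg : n + 1 + min (n + 1) k = m + 2 := by omega
      simp only [if_pos hnk, hdeg, integral_mul_sub_pow_div_factorial]
    · have hdeg : n + 1 + min (n + 1) k = m + 1 := by omega
      simp only [if_neg hnk, one_mul, hdeg, integral_sub_pow_div_factorial]

theorem simplexVertex_mul_eq_zero {n : ℕ} (j : Fin (n + 1)) {i i' : Fin n} (h : i ≠ i') :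
    simplexVertex n j i * simplexVertex n j i' = 0 := by
  have : ¬((j : ℕ) = i + 1 ∧ (j : ℕ) = i' + 1) := fun ⟨h1, h2⟩ => h (Fin.ext (by omega))
  unfold simplexVertex
  split_ifs <;> simp_all

theorem stmt_11 (n : ℕ) (hn : 3 ≤ n) :
    let f : (Fin n → ℝ) → ℝ := fun v =>
      v ⟨0, by omega⟩ * v ⟨1, by omega⟩ * v ⟨2, by omega⟩
    ((n + 1 : ℝ) / ((n + 2) * (Nat.factorial n : ℝ))) * f (fun _ => 1 / (n + 1 : ℝ))
        + (1 / (Nat.factorial (n + 2) : ℝ)) * ∑ j : Fin (n + 1), f (simplexVertex n j)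
      = 1 / ((n + 1 : ℝ) * (Nat.factorial (n + 2) : ℝ)) ∧
    (∫ v in Simplex n, f v) = 1 / (Nat.factorial (n + 3) : ℝ) ∧
    1 / ((n + 1 : ℝ) * (Nat.factorial (n + 2) : ℝ)) ≠ 1 / (Nat.factorial (n + 3) : ℝ) := by
  intro f
  have hvertex : ∀ j, f (simplexVertex n j) = 0 := fun j => by
    have h01 := simplexVertex_mul_eq_zero j (i := ⟨0, by omega⟩) (i' := ⟨1, by omega⟩) (by simp)
    simp only [f, h01, zero_mul]
  have hfact2 : ((n + 2).factorial : ℝ) = (n + 2) * ((n + 1) * n.factorial) := by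
    simp only [Nat.factorial_succ]; push_cast; ring
  have hfact3 : ((n + 3).factorial : ℝ) = (n + 3) * (n + 2).factorial := by
    rw [Nat.factorial_succ]; push_cast; ring
  refine ⟨?_, ?_, ?_⟩
  · simp only [f, hvertex, Finset.sum_const_zero, mul_zero, add_zero, hfact2]
    field_simp
  · have hf : f = initialProd 3 := funext fun v => (initialProd_three hn v).symm
    rw [hf, show Simplex n = scaledSimplex n 1 from rfl,
      setIntegral_initialProd_scaledSimplex 3 n zero_le_one, min_eq_right hn, one_pow]
  · rw [hfact3, Ne, one_div, one_div, inv_inj, mul_comm, mul_comm _ ((n + 2).factorial : ℝ),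
      mul_right_inj' (by positivity)]
    intro h
    linarith
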